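/- arXiv:2209.12269 — 3 statements merged into one kernel-verified Lean document; each statement's English description precedes it below -/
import Mathlib

section
/- Let f(z, ·) : ℝᵈ → ℝ be μ-strongly convex for each z and suppose ‖∇_θ f(z, θ)‖ ≤ L for all z and θ. Given points z₁, …, zₙ and a subset U ⊆ {1,…,n} with |U| = m < n, let θ̂ₙ minimize Fₙ(θ) = (1/n)∑ᵢ f(zᵢ, θ) and let θ̂ₙ,₋U minimize F₋U(θ) = (1/(n−m))∑_{i∉U} f(zᵢ, θ). Then ‖θ̂ₙ − θ̂ₙ,₋U‖ ≤ mL/(μn). -/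
/-! The unnormalized full risk `G = ∑ᵢ f (zᵢ, ·)` is `nμ`-strongly convex, so its derivative is
strongly monotone: `nμ ‖θ̂ₙ - θ̂ₙ,₋U‖² ≤ (DG(θ̂ₙ,₋U) - DG(θ̂ₙ)) (θ̂ₙ,₋U - θ̂ₙ)`. Here `DG(θ̂ₙ) = 0`,
and since `θ̂ₙ,₋U` minimizes the sum over `Uᶜ`, `DG(θ̂ₙ,₋U)` is the sum of the `m` derivatives
indexed by `U`, of norm at most `mL`. -/

open Set Finset

section Convexity

variable {E : Type*} [NormedAddCommGroup E]

lemma ConvexOn.le_of_hasFDerivAt [NormedSpace ℝ E] {s : Set E} {g : E → ℝ} {g' : E →L[ℝ] ℝ}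
    {x y : E} (hg : ConvexOn ℝ s g) (hx : x ∈ s) (hy : y ∈ s) (hg' : HasFDerivAt g g' x) :
    g x + g' (y - x) ≤ g y := by
  set ℓ : ℝ →ᵃ[ℝ] E := AffineMap.lineMap x y
  have hℓ : HasDerivAt (g ∘ ℓ) (g' (y - x)) 0 := by
    have := AffineMap.hasDerivAt_lineMap (a := x) (b := y) (x := (0 : ℝ))
    rw [← AffineMap.lineMap_apply_zero x y (k := ℝ)] at hg'
    exact hg'.comp_hasDerivAt 0 this
  have := (hg.comp_affineMap ℓ).le_slope_of_hasDerivAt (x := 0) (y := 1)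
    (by simpa [ℓ] using hx) (by simpa [ℓ] using hy) one_pos hℓ
  simp only [slope_def_field, Function.comp_apply, ℓ, AffineMap.lineMap_apply_one,
    AffineMap.lineMap_apply_zero, sub_zero, div_one] at this
  linarith

variable [InnerProductSpace ℝ E]

lemma StrongConvexOn.le_of_hasFDerivAt {s : Set E} {m : ℝ} {g : E → ℝ} {g' : E →L[ℝ] ℝ}
    {x y : E} (hg : StrongConvexOn s m g) (hx : x ∈ s) (hy : y ∈ s) (hg' : HasFDerivAt g g' x) :
    g x + g' (y - x) + m / 2 * ‖y - x‖ ^ 2 ≤ g y := by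
  have hconv := (strongConvexOn_iff_convex.1 hg).le_of_hasFDerivAt hx hy
    (hg'.sub ((hasStrictFDerivAt_norm_sq x).hasFDerivAt.const_mul (m / 2)))
  have hsq : ‖y‖ ^ 2 = ‖x‖ ^ 2 + 2 * inner ℝ x (y - x) + ‖y - x‖ ^ 2 := by
    rw [← norm_add_sq_real, add_sub_cancel]
  simp only [sub_apply, smul_apply, innerSL_apply_apply, smul_eq_mul, nsmul_eq_mul,
    Nat.cast_ofNat] at hconv
  rw [hsq] at hconv
  linarith

lemma StrongConvexOn.mul_norm_sub_sq_le {s : Set E} {m : ℝ} {g : E → ℝ} {g'x g'y : E →L[ℝ] ℝ}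
    {x y : E} (hg : StrongConvexOn s m g) (hx : x ∈ s) (hy : y ∈ s)
    (hg'x : HasFDerivAt g g'x x) (hg'y : HasFDerivAt g g'y y) :
    m * ‖x - y‖ ^ 2 ≤ (g'x - g'y) (x - y) := by
  have hxy := hg.le_of_hasFDerivAt hx hy hg'x
  have hyx := hg.le_of_hasFDerivAt hy hx hg'y
  rw [← neg_sub x y, map_neg, norm_neg] at hxy
  rw [sub_apply]
  linarith

lemma StrongConvexOn.add {s : Set E} {m n : ℝ} {f g : E → ℝ} (hf : StrongConvexOn s m f)
    (hg : StrongConvexOn s n g) : StrongConvexOn s (m + n) (f + g) := by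
  have := UniformConvexOn.add hf hg
  unfold StrongConvexOn
  convert this using 1
  ext r
  simp only [Pi.add_apply]
  ring

lemma StrongConvexOn.sum {ι : Type*} {s : Set E} (hs : Convex ℝ s) {t : Finset ι} {m : ι → ℝ}
    {g : ι → E → ℝ} (h : ∀ i ∈ t, StrongConvexOn s (m i) (g i)) :
    StrongConvexOn s (∑ i ∈ t, m i) (fun x ↦ ∑ i ∈ t, g i x) := by
  induction t using Finset.cons_induction with
  | empty => simpa using convexOn_const (0 : ℝ) hs
  | cons j t hj ih =>
    simp only [Finset.sum_cons]
    exact (h j (mem_cons_self j t)).add (ih fun i hi ↦ h i (mem_cons_of_mem hi))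

lemma StrongConvexOn.mul_norm_sub_le_of_isMinOn_add {c : ℝ} {g k : E → ℝ} {x y : E}
    (hconv : StrongConvexOn univ c (fun x ↦ g x + k x))
    (hx : IsMinOn (fun x ↦ g x + k x) univ x) (hy : IsMinOn g univ y)
    (hdx : DifferentiableAt ℝ (fun x ↦ g x + k x) x)
    (hgy : DifferentiableAt ℝ g y) (hky : DifferentiableAt ℝ k y) :
    c * ‖x - y‖ ≤ ‖fderiv ℝ k y‖ := by
  have hx' : fderiv ℝ (fun x ↦ g x + k x) x = 0 :=
    (hx.isLocalMin Filter.univ_mem).hasFDerivAt_eq_zero hdx.hasFDerivAt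
  have hy' : fderiv ℝ g y = 0 :=
    (hy.isLocalMin Filter.univ_mem).hasFDerivAt_eq_zero hgy.hasFDerivAt
  have hmono := hconv.mul_norm_sub_sq_le (mem_univ x) (mem_univ y) hdx.hasFDerivAt
    (hgy.hasFDerivAt.add hky.hasFDerivAt)
  rw [hx', hy', zero_add, zero_sub, neg_apply, ← map_neg, neg_sub] at hmono
  rcases (norm_nonneg (x - y)).eq_or_lt with h0 | hpos
  · rw [← h0, mul_zero]
    exact norm_nonneg _
  · refine le_of_mul_le_mul_right ?_ hpos
    calc c * ‖x - y‖ * ‖x - y‖ = c * ‖x - y‖ ^ 2 := by ring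
      _ ≤ fderiv ℝ k y (y - x) := hmono
      _ ≤ ‖fderiv ℝ k y‖ * ‖x - y‖ := by
        rw [norm_sub_rev]
        exact (le_abs_self _).trans ((fderiv ℝ k y).le_opNorm (y - x))

lemma norm_fderiv_sum_le [CompleteSpace E] {ι : Type*} {t : Finset ι} {g : ι → E → ℝ} {x : E}
    {L : ℝ}
    (hd : ∀ i ∈ t, DifferentiableAt ℝ (g i) x) (hL : ∀ i ∈ t, ‖gradient (g i) x‖ ≤ L) :
    ‖fderiv ℝ (fun x ↦ ∑ i ∈ t, g i x) x‖ ≤ t.card * L := by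
  rw [fderiv_fun_sum hd]
  calc ‖∑ i ∈ t, fderiv ℝ (g i) x‖ ≤ ∑ i ∈ t, ‖fderiv ℝ (g i) x‖ := norm_sum_le _ _
    _ ≤ ∑ _i ∈ t, L := Finset.sum_le_sum fun i hi ↦ by
        simpa [gradient] using hL i hi
    _ = t.card * L := by rw [Finset.sum_const, nsmul_eq_mul]

end Convexity

lemma IsMinOn.of_const_mul {α : Type*} {s : Set α} {f : α → ℝ} {a : α} {c : ℝ} (hc : 0 < c)
    (h : IsMinOn (fun x ↦ c * f x) s a) : IsMinOn f s a :=
  fun _ hx ↦ le_of_mul_le_mul_left (h hx) hc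

theorem stmt1_general {d n : ℕ} {Z : Type*} (μ L : ℝ) (hμ : 0 < μ)
    (f : Z → EuclideanSpace ℝ (Fin d) → ℝ)
    (hconv : ∀ z, StrongConvexOn univ μ (f z))
    (hdiff : ∀ z, Differentiable ℝ (f z))
    (hgrad : ∀ z θ, ‖gradient (f z) θ‖ ≤ L)
    (z : Fin n → Z) (U : Finset (Fin n)) (m : ℕ) (hm : U.card = m) (hmn : m < n)
    (θhat θhatU : EuclideanSpace ℝ (Fin d))
    (hθhat : IsMinOn (fun θ => (1 / (n : ℝ)) * ∑ i : Fin n, f (z i) θ) univ θhat)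
    (hθhatU : IsMinOn
      (fun θ => (1 / ((n : ℝ) - m)) * ∑ i ∈ Uᶜ, f (z i) θ) univ θhatU) :
    ‖θhat - θhatU‖ ≤ m * L / (μ * n) := by
  have hmn' : (m : ℝ) < n := by exact_mod_cast hmn
  have hn : (0 : ℝ) < n := by linarith [(m.cast_nonneg : (0 : ℝ) ≤ m)]
  have hsplit : (fun θ ↦ ∑ i, f (z i) θ) = fun θ ↦ ∑ i ∈ Uᶜ, f (z i) θ + ∑ i ∈ U, f (z i) θ :=
    funext fun θ ↦ (sum_compl_add_sum U _).symm
  have hsc : StrongConvexOn univ (n * μ) (fun θ ↦ ∑ i, f (z i) θ) := by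
    simpa using StrongConvexOn.sum (t := Finset.univ) convex_univ fun i _ ↦ hconv (z i)
  have hdiffSum (t : Finset (Fin n)) : Differentiable ℝ (fun θ ↦ ∑ i ∈ t, f (z i) θ) :=
    Differentiable.fun_sum fun i _ ↦ hdiff (z i)
  have hmin := hθhat.of_const_mul (by positivity)
  rw [hsplit] at hsc hmin
  have hstab := hsc.mul_norm_sub_le_of_isMinOn_add hmin
    (hθhatU.of_const_mul (by simpa using hmn')) ((hdiffSum Uᶜ θhat).add (hdiffSum U θhat))
    (hdiffSum Uᶜ θhatU) (hdiffSum U θhatU)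
  have hbound := norm_fderiv_sum_le (t := U) (fun i _ ↦ (hdiff (z i)).differentiableAt)
    (fun i _ ↦ hgrad (z i) θhatU)
  rw [hm] at hbound
  rw [le_div_iff₀ (by positivity)]
  linarith

/-- Stability of the ERM under deletion of `m` points: if each `f z ·` is `μ`-strongly convex
and has gradients bounded by `L`, and `θ̂ₙ` minimizes the full empirical risk while `θ̂ₙ,₋U`
minimizes the leave-`U`-out empirical risk with `|U| = m < n`, then
`‖θ̂ₙ − θ̂ₙ,₋U‖ ≤ mL/(μn)`. -/
theorem stmt1 {d n : ℕ} {Z : Type*} (μ L : ℝ) (hμ : 0 < μ) (hL : 0 ≤ L)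
    (f : Z → EuclideanSpace ℝ (Fin d) → ℝ)
    (hconv : ∀ z, StrongConvexOn univ μ (f z))
    (hdiff : ∀ z, Differentiable ℝ (f z))
    (hgrad : ∀ z θ, ‖gradient (f z) θ‖ ≤ L)
    (z : Fin n → Z) (U : Finset (Fin n)) (m : ℕ) (hm : U.card = m) (hmn : m < n)
    (θhat θhatU : EuclideanSpace ℝ (Fin d))
    (hθhat : IsMinOn (fun θ => (1 / (n : ℝ)) * ∑ i : Fin n, f (z i) θ) univ θhat)
    (hθhatU : IsMinOn
      (fun θ => (1 / ((n : ℝ) - m)) * ∑ i ∈ Uᶜ, f (z i) θ) univ θhatU) :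
    ‖θhat - θhatU‖ ≤ m * L / (μ * n) :=
  stmt1_general μ L hμ f hconv hdiff hgrad z U m hm hmn θhat θhatU hθhat hθhatU
end

section
/- (Cross-validation unlearning counterexample, part 2) Continuing the setup: after actually deleting the point of value n, the remaining dataset consists of n−1 copies of −1/n, the new CV error is CV'(λ) = (1/(2(n−1)))∑ᵢ(−1/n − z̄'₋ᵢ/(1+λ))² which is minimized over Λ = {0, ∞} at λ = 0, yielding retrained model θ̂ₙ₋₁(0) = −1/n. Meanwhile the approximate-unlearning output with the originally selected λ = ∞ is θ̃ = 0. Hence ‖θ̃ − θ̂ₙ₋₁(0)‖ = 1/n, which does not vanish faster than 1/n. -/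
open Set Finset

/-- Cross-validation counterexample, part 2: after deleting the point of value `n`, the
remaining dataset is `n−1` copies of `−1/n`; the new CV error is minimized over `{0, ∞}` at
`λ = 0`, the retrained model is `θ̂ₙ₋₁(0) = −1/n` (the minimizer of the post-deletion
empirical risk), while the approximate-unlearning output with the original `λ = ∞` is
`θ̃ = 0`; hence `‖θ̃ − θ̂ₙ₋₁(0)‖ = 1/n`. -/
theorem stmt16 (n : ℕ) (hn : 2 ≤ n)
    (CV' : ℝ → ℝ)
    (hCV' : ∀ lam : ℝ, CV' lam =
      (1 / (2 * ((n : ℝ) - 1))) *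
        ∑ _i : Fin (n - 1), (-(1 / (n : ℝ)) - (-(1 / (n : ℝ))) / (1 + lam)) ^ 2)
    (CV'inf : ℝ)
    (hCV'inf : CV'inf =
      (1 / (2 * ((n : ℝ) - 1))) * ∑ _i : Fin (n - 1), (1 / (n : ℝ)) ^ 2)
    (θtilde : ℝ) (hθtilde : θtilde = 0) :
    CV' 0 ≤ CV'inf ∧
      IsMinOn
        (fun θ : ℝ => (1 / (2 * ((n : ℝ) - 1))) *
          ∑ _i : Fin (n - 1), (-(1 / (n : ℝ)) - θ) ^ 2) univ (-(1 / (n : ℝ))) ∧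
      ‖θtilde - (-(1 / (n : ℝ)))‖ = 1 / n := by
  have hn1 : (1 : ℝ) < (n : ℝ) := by exact_mod_cast hn.trans_lt' one_lt_two
  have hfac : 0 ≤ (1 / (2 * ((n : ℝ) - 1))) := by
    apply div_nonneg one_pos.le; linarith
  refine ⟨?_, ?_, ?_⟩
  · rw [hCV' 0, hCV'inf]
    have h0 : (-(1 / (n : ℝ)) - (-(1 / (n : ℝ))) / (1 + 0)) = 0 := by ring
    rw [h0]
    simp only [zero_pow two_ne_zero, Finset.sum_const, smul_zero, mul_zero]
    exact mul_nonneg hfac (nsmul_nonneg (sq_nonneg _) _)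
  · intro θ _
    simp only
    have h1 : (-(1 / (n : ℝ)) - -(1 / (n : ℝ))) ^ 2 = 0 := by ring
    rw [h1]
    have h2 : (0:ℝ) ≤ ∑ _i : Fin (n - 1), (-(1 / (n : ℝ)) - θ) ^ 2 :=
      Finset.sum_nonneg fun _ _ => sq_nonneg _
    simpa using mul_nonneg hfac h2
  · rw [hθtilde]
    have hnpos : (0 : ℝ) < n := by linarith
    rw [Real.norm_eq_abs, zero_sub, neg_neg, abs_of_nonneg (by positivity)]
end

section
/- (Replace-one stability of strongly convex ERM) Let f(z,·) be convex and L-Lipschitz for all z, and suppose the empirical objective Fₙ(θ) = (1/n)∑ᵢf(zᵢ,θ) is μ-strongly convex. Let S' differ from S in exactly one point (z_j replaced by z_j'), with minimizers θ̂ and θ̂'. Then ‖θ̂ − θ̂'‖ ≤ 2L/(μn). -/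
open Set Finset

open Filter in
lemma strong_min_growth {E : Type*} [NormedAddCommGroup E] [NormedSpace ℝ E]
    {μ : ℝ} {F : E → ℝ} (hsc : StrongConvexOn univ μ F) {θ : E}
    (hmin : IsMinOn F univ θ) (y : E) :
    F θ + μ / 2 * ‖y - θ‖ ^ 2 ≤ F y := by
  set c : ℝ := μ / 2 * ‖y - θ‖ ^ 2 with hc
  have key : ∀ a : ℝ, 0 < a → a < 1 → (1 - a) * c ≤ F y - F θ := by
    intro a ha ha1
    have hb : (0:ℝ) ≤ 1 - a := by linarith
    have h2 := hsc.2 (mem_univ y) (mem_univ θ) ha.le hb (by ring)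
    have hmin' : F θ ≤ F (a • y + (1 - a) • θ) := hmin (mem_univ _)
    have : F θ ≤ a * F y + (1 - a) * F θ - a * (1 - a) * c := by
      simpa [smul_eq_mul] using hmin'.trans h2
    nlinarith
  have htend : Tendsto (fun a : ℝ => (1 - a) * c) (nhdsWithin 0 (Ioi 0)) (nhds c) := by
    have : Tendsto (fun a : ℝ => (1 - a) * c) (nhds 0) (nhds ((1 - 0) * c)) := by
      exact (tendsto_const_nhds.sub tendsto_id).mul tendsto_const_nhds
    simpa using this.mono_left nhdsWithin_le_nhds
  have hev : ∀ᶠ a in nhdsWithin (0:ℝ) (Ioi 0), (1 - a) * c ≤ F y - F θ := by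
    filter_upwards [Ioo_mem_nhdsGT_of_mem (by norm_num : (0:ℝ) ∈ Set.Ico 0 1)] with a ha
    exact key a ha.1 ha.2
  have := le_of_tendsto htend hev
  linarith

/-- Replace-one stability of strongly convex ERM: if `f(z,·)` is convex and `L`-Lipschitz and
the empirical objectives are `μ`-strongly convex, and the datasets `S`, `S'` differ in exactly
one point, then the respective minimizers satisfy `‖θ̂ − θ̂'‖ ≤ 2L/(μn)`. -/
theorem stmt18 {d n : ℕ} {Z : Type*} (μ L : ℝ) (hμ : 0 < μ) (hL : 0 ≤ L) (hn : 0 < n)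
    (f : Z → EuclideanSpace ℝ (Fin d) → ℝ)
    (hconv : ∀ z, ConvexOn ℝ univ (f z))
    (hLip : ∀ z x y, |f z x - f z y| ≤ L * ‖x - y‖)
    (S S' : Fin n → Z) (j : Fin n)
    (hdiff : ∀ i, i ≠ j → S i = S' i)
    (hsc : StrongConvexOn univ μ (fun θ => (1 / (n : ℝ)) * ∑ i, f (S i) θ))
    (hsc' : StrongConvexOn univ μ (fun θ => (1 / (n : ℝ)) * ∑ i, f (S' i) θ))
    (θhat θhat' : EuclideanSpace ℝ (Fin d))
    (hθhat : IsMinOn (fun θ => (1 / (n : ℝ)) * ∑ i, f (S i) θ) univ θhat)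
    (hθhat' : IsMinOn (fun θ => (1 / (n : ℝ)) * ∑ i, f (S' i) θ) univ θhat') :
    ‖θhat - θhat'‖ ≤ 2 * L / (μ * n) := by
  have hn' : (0:ℝ) < n := by exact_mod_cast hn
  set c : ℝ := ‖θhat - θhat'‖ with hcdef
  have hc0 : 0 ≤ c := norm_nonneg _
  set F : EuclideanSpace ℝ (Fin d) → ℝ := fun θ => (1 / (n : ℝ)) * ∑ i, f (S i) θ with hF
  set F' : EuclideanSpace ℝ (Fin d) → ℝ := fun θ => (1 / (n : ℝ)) * ∑ i, f (S' i) θ with hF'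
  have h1 : F θhat + μ / 2 * ‖θhat' - θhat‖ ^ 2 ≤ F θhat' :=
    strong_min_growth hsc hθhat θhat'
  have h2 : F' θhat' + μ / 2 * ‖θhat - θhat'‖ ^ 2 ≤ F' θhat :=
    strong_min_growth hsc' hθhat' θhat
  rw [norm_sub_rev] at h1
  -- the two objectives differ only in the j-th summand
  have hdiffF : ∀ θ, F θ - F' θ = (1 / (n : ℝ)) * (f (S j) θ - f (S' j) θ) := by
    intro θ
    have hsum : ∑ i, f (S i) θ - ∑ i, f (S' i) θ = f (S j) θ - f (S' j) θ := by
      rw [← Finset.sum_sub_distrib]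
      rw [Finset.sum_eq_single j]
      · intro i _ hij
        rw [hdiff i hij]; ring
      · intro h; exact absurd (Finset.mem_univ j) h
    simp only [hF, hF']
    rw [← mul_sub, hsum]
  have key : μ * c ^ 2 ≤ 2 * L * c / n := by
    have hA := hdiffF θhat'
    have hB := hdiffF θhat
    have hL1 : f (S j) θhat' - f (S j) θhat ≤ L * c := by
      have := (abs_le.mp (hLip (S j) θhat' θhat)).2
      rwa [norm_sub_rev] at this
    have hL2 : f (S' j) θhat - f (S' j) θhat' ≤ L * c := by
      exact (abs_le.mp (hLip (S' j) θhat θhat')).2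
    have hinv : (0:ℝ) < 1 / (n:ℝ) := by positivity
    have hnum : (f (S j) θhat' - f (S' j) θhat') - (f (S j) θhat - f (S' j) θhat)
        ≤ 2 * L * c := by linarith
    have hstep : (F θhat' - F' θhat') - (F θhat - F' θhat) ≤ (1 / (n:ℝ)) * (2 * L * c) := by
      rw [hA, hB, ← mul_sub]
      exact mul_le_mul_of_nonneg_left hnum hinv.le
    have : μ * c ^ 2 ≤ (F θhat' - F' θhat') - (F θhat - F' θhat) := by nlinarith
    calc μ * c ^ 2 ≤ (1 / (n:ℝ)) * (2 * L * c) := le_trans this hstep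
      _ = 2 * L * c / n := by ring
  rcases eq_or_lt_of_le hc0 with h | h
  · rw [← h]; positivity
  · rw [le_div_iff₀ (by positivity)]
    have key' : μ * c ^ 2 * n ≤ 2 * L * c := by
      rw [le_div_iff₀ hn'] at key
      linarith
    nlinarith [mul_pos h hn']
end
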